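/- arXiv:1903.11887 — 6 statements merged into one kernel-verified Lean document; each statement's English description precedes it below -/
import Mathlib

section
/- Let X be a d×d Hermitian matrix with Tr(X)=0 and Tr(X²)=d, where d≥2. Then every eigenvalue μ of X satisfies |μ| ≤ √(d−1), and consequently √(d−1)·𝟙 + X and √(d−1)·𝟙 − X are positive semidefinite. -/
open Matrix
open scoped ComplexOrder

/-- Let `X` be a `d × d` Hermitian matrix with `Tr X = 0` and `Tr (X²) = d`,
`d ≥ 2`. Then every eigenvalue `μ` of `X` satisfies `|μ| ≤ √(d-1)`, and consequently both
`√(d-1)·𝟙 + X` and `√(d-1)·𝟙 - X` are positive semidefinite. -/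
theorem eigenvalue_bound_and_psd (d : ℕ) (hd : 2 ≤ d)
    (X : Matrix (Fin d) (Fin d) ℂ) (hX : X.IsHermitian)
    (htr : X.trace = 0) (htr2 : (X * X).trace = (d : ℂ)) :
    (∀ i, |hX.eigenvalues i| ≤ Real.sqrt ((d : ℝ) - 1)) ∧
    ((Real.sqrt ((d : ℝ) - 1) : ℂ) • (1 : Matrix (Fin d) (Fin d) ℂ) + X).PosSemidef ∧
    ((Real.sqrt ((d : ℝ) - 1) : ℂ) • (1 : Matrix (Fin d) (Fin d) ℂ) - X).PosSemidef := by
  classical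
  set c : ℝ := Real.sqrt ((d : ℝ) - 1) with hc_def
  set u : Matrix (Fin d) (Fin d) ℂ := (hX.eigenvectorUnitary : Matrix (Fin d) (Fin d) ℂ) with hu_def
  have huu : u * star u = 1 := Matrix.mem_unitaryGroup_iff.mp hX.eigenvectorUnitary.2
  have huu' : star u * u = 1 := Matrix.mem_unitaryGroup_iff'.mp hX.eigenvectorUnitary.2
  set D : Matrix (Fin d) (Fin d) ℂ := diagonal (RCLike.ofReal ∘ hX.eigenvalues) with hD_def
  have hspec : X = u * D * star u := hX.spectral_theorem
  -- sum of eigenvalues is 0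
  have h1 : ∑ i, hX.eigenvalues i = 0 := by
    have hh : D.trace = (0 : ℂ) := by
      rw [← htr, hspec, Matrix.trace_mul_comm, ← mul_assoc, huu', one_mul]
    rw [hD_def, Matrix.trace_diagonal] at hh
    simp only [Function.comp_apply, ← RCLike.ofReal_sum] at hh
    exact RCLike.ofReal_eq_zero.mp hh
  -- sum of squares of eigenvalues is d
  have h2 : ∑ i, hX.eigenvalues i ^ 2 = (d : ℝ) := by
    have hXX : X * X = u * (D * D) * star u := by
      rw [hspec]
      simp only [mul_assoc]
      rw [← mul_assoc (star u) u (D * star u), huu', one_mul]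
    have hh : (D * D).trace = (d : ℂ) := by
      rw [← htr2, hXX, Matrix.trace_mul_cycle, ← mul_assoc, huu', one_mul]
    rw [hD_def, diagonal_mul_diagonal, Matrix.trace_diagonal] at hh
    simp only [Function.comp_apply, Pi.mul_apply, ← RCLike.ofReal_mul, ← sq, ← RCLike.ofReal_pow,
      ← RCLike.ofReal_sum] at hh
    rw [show ((d : ℕ) : ℂ) = ((d : ℝ) : ℂ) by push_cast; ring] at hh
    exact (RCLike.ofReal_inj (K := ℂ)).mp hh
  -- eigenvalue bound
  have hbound : ∀ i, |hX.eigenvalues i| ≤ c := by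
    intro i
    set f := hX.eigenvalues with hf
    have hsq : f i ^ 2 ≤ (d : ℝ) - 1 := by
      have hAi : f i + ∑ j ∈ Finset.univ.erase i, f j = ∑ j, f j :=
        Finset.add_sum_erase Finset.univ f (Finset.mem_univ i)
      have hBi : f i ^ 2 + ∑ j ∈ Finset.univ.erase i, f j ^ 2 = ∑ j, f j ^ 2 := by
        have := Finset.add_sum_erase Finset.univ (fun j => f j ^ 2) (Finset.mem_univ i)
        simpa using this
      have hs : ∑ j ∈ Finset.univ.erase i, f j = - f i := by
        rw [h1] at hAi; linarith
      have hs2 : ∑ j ∈ Finset.univ.erase i, f j ^ 2 = (d : ℝ) - f i ^ 2 := by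
        rw [h2] at hBi; linarith
      have hcs := sq_sum_le_card_mul_sum_sq (s := Finset.univ.erase i) (f := f)
      rw [hs, hs2, Finset.card_erase_of_mem (Finset.mem_univ i), Finset.card_univ,
        Fintype.card_fin] at hcs
      have hd1 : (1 : ℕ) ≤ d := le_trans one_le_two hd
      have hcard : ((d - 1 : ℕ) : ℝ) = (d : ℝ) - 1 := by
        push_cast [Nat.cast_sub hd1]; ring
      rw [hcard] at hcs
      have hd' : (2 : ℝ) ≤ (d : ℝ) := by exact_mod_cast hd
      nlinarith [hcs, hd', neg_sq (f i)]
    calc |f i| = Real.sqrt (f i ^ 2) := (Real.sqrt_sq_eq_abs _).symm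
      _ ≤ c := Real.sqrt_le_sqrt hsq
  refine ⟨hbound, ?_, ?_⟩
  · have heq : (c : ℂ) • (1 : Matrix (Fin d) (Fin d) ℂ) + X
        = u * diagonal (fun j => ((c + hX.eigenvalues j : ℝ) : ℂ)) * star u := by
      have hdeq : (diagonal (fun j => ((c + hX.eigenvalues j : ℝ) : ℂ)) : Matrix (Fin d) (Fin d) ℂ)
          = (c : ℂ) • 1 + D := by
        ext j k
        rcases eq_or_ne j k with h | h <;>
          simp [hD_def, Matrix.diagonal_apply, Matrix.one_apply, h, Function.comp] <;>
          push_cast <;> ring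
      rw [hdeq, mul_add, add_mul, ← hspec, Matrix.mul_smul, Matrix.smul_mul, mul_one, huu]
    rw [heq, Matrix.star_eq_conjTranspose]
    exact PosSemidef.mul_mul_conjTranspose_same (posSemidef_diagonal_iff.mpr fun j => by
      rw [Complex.zero_le_real]
      have := abs_le.mp (hbound j)
      linarith [this.2]) u
  · have heq : (c : ℂ) • (1 : Matrix (Fin d) (Fin d) ℂ) - X
        = u * diagonal (fun j => ((c - hX.eigenvalues j : ℝ) : ℂ)) * star u := by
      have hdeq : (diagonal (fun j => ((c - hX.eigenvalues j : ℝ) : ℂ)) : Matrix (Fin d) (Fin d) ℂ)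
          = (c : ℂ) • 1 - D := by
        ext j k
        rcases eq_or_ne j k with h | h <;>
          simp [hD_def, Matrix.diagonal_apply, Matrix.one_apply, h, Function.comp] <;>
          push_cast <;> ring
      rw [hdeq, mul_sub, sub_mul, ← hspec, Matrix.mul_smul, Matrix.smul_mul, mul_one, huu]
    rw [heq, Matrix.star_eq_conjTranspose]
    exact PosSemidef.mul_mul_conjTranspose_same (posSemidef_diagonal_iff.mpr fun j => by
      rw [Complex.zero_le_real]
      have := abs_le.mp (hbound j)
      linarith [this.1]) u
end

section
/- Let ρ_AB be a density operator on ℂ^{d_A} ⊗ ℂ^{d_B}, and let X be a traceless Hermitian operator on ℂ^{d_A} with Tr(X²)=d_A, and Y a traceless Hermitian operator on ℂ^{d_B} with Tr(Y²)=d_B. Then |Tr(ρ_AB (X⊗Y))| ≥ √(d_B−1)·|Tr(ρ_AB (X⊗𝟙))| + √(d_A−1)·|Tr(ρ_AB (𝟙⊗Y))| − √(d_A−1)√(d_B−1). -/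
/-! Since `X` is traceless with `Tr X² = d_A`, Cauchy–Schwarz bounds every eigenvalue of `X` by
`√(d_A - 1)` in absolute value, so `√(d_A - 1) ± X` is positive semidefinite, and likewise
`√(d_B - 1) ± Y`. A Kronecker product of positive semidefinite matrices is positive semidefinite, so
its expectation in `ρ` is nonnegative; expanding it gives
`αβ ± α⟨𝟙⊗Y⟩ ± β⟨X⊗𝟙⟩ ± ⟨X⊗Y⟩ ≥ 0` for all four choices of signs, and choosing the signs
against those of `⟨X⊗𝟙⟩` and `⟨𝟙⊗Y⟩` gives the bound. -/

open Matrix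
open scoped ComplexOrder Kronecker

open Finset in
theorem card_mul_sq_le_of_sum_eq_zero {ι : Type*} [Fintype ι] {f : ι → ℝ}
    (hf : ∑ j, f j = 0) (i : ι) :
    Fintype.card ι * f i ^ 2 ≤ (Fintype.card ι - 1) * ∑ j, f j ^ 2 := by
  classical
  have hrest : ∑ j ∈ univ.erase i, f j = -f i := by
    linarith [sum_erase_add univ f (mem_univ i)]
  have hrest_sq : ∑ j ∈ univ.erase i, f j ^ 2 = ∑ j, f j ^ 2 - f i ^ 2 := by
    linarith [sum_erase_add univ (f · ^ 2) (mem_univ i)]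
  have hcs := sq_sum_le_card_mul_sum_sq (s := univ.erase i) (f := f)
  rw [hrest, hrest_sq, card_erase_of_mem (mem_univ i), card_univ,
    Nat.cast_sub (Fintype.card_pos_iff.2 ⟨i⟩), Nat.cast_one] at hcs
  linarith

theorem mul_abs_add_mul_abs_sub_mul_le_abs {α β a b c : ℝ}
    (hpp : 0 ≤ α * β + α * b + β * a + c) (hmp : 0 ≤ α * β + α * b - β * a - c)
    (hpm : 0 ≤ α * β - α * b + β * a - c) (hmm : 0 ≤ α * β - α * b - β * a + c) :
    β * |a| + α * |b| - α * β ≤ |c| := by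
  rcases abs_cases a with ⟨ha, _⟩ | ⟨ha, _⟩ <;> rcases abs_cases b with ⟨hb, _⟩ | ⟨hb, _⟩ <;>
    rw [ha, hb] <;> linarith [le_abs_self c, neg_abs_le c]

namespace Matrix

theorem IsHermitian.kronecker {𝕜 n m : Type*} [RCLike 𝕜] {A : Matrix n n 𝕜}
    {B : Matrix m m 𝕜} (hA : A.IsHermitian) (hB : B.IsHermitian) : (A ⊗ₖ B).IsHermitian := by
  rw [IsHermitian, conjTranspose_kronecker, hA.eq, hB.eq]

theorem neg_kronecker {α l m n p : Type*} [Mul α] [HasDistribNeg α] (A : Matrix l m α)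
    (B : Matrix n p α) : (-A) ⊗ₖ B = -(A ⊗ₖ B) := by
  ext; simp

theorem kronecker_neg {α l m n p : Type*} [Mul α] [HasDistribNeg α] (A : Matrix l m α)
    (B : Matrix n p α) : A ⊗ₖ (-B) = -(A ⊗ₖ B) := by
  ext; simp

variable {𝕜 n m : Type*} [RCLike 𝕜] [Fintype n] [Fintype m]

theorem IsHermitian.norm_trace_mul_eq_abs_re {A B : Matrix n n ℂ} (hA : A.IsHermitian)
    (hB : B.IsHermitian) : ‖(A * B).trace‖ = |(A * B).trace.re| := by
  refine (Complex.abs_re_eq_norm.mpr ?_).symm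
  rw [← Complex.conj_eq_iff_im, ← Complex.star_def, ← trace_conjTranspose, conjTranspose_mul,
    hA.eq, hB.eq, trace_mul_comm]

variable [DecidableEq n] [DecidableEq m]

theorem PosSemidef.trace_mul_nonneg {A B : Matrix n n 𝕜} (hA : A.PosSemidef)
    (hB : B.PosSemidef) : 0 ≤ (A * B).trace := by
  open scoped MatrixOrder Matrix.Norms.L2Operator in
  obtain ⟨C, rfl⟩ := CStarAlgebra.nonneg_iff_eq_star_mul_self.mp hB.nonneg
  rw [← Matrix.mul_assoc, trace_mul_cycle, star_eq_conjTranspose]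
  exact (hA.mul_mul_conjTranspose_same C).trace_nonneg

theorem IsHermitian.trace_mul_self {A : Matrix n n 𝕜} (hA : A.IsHermitian) :
    (A * A).trace = ∑ i, ((hA.eigenvalues i ^ 2 : ℝ) : 𝕜) := by
  conv_lhs => rw [hA.spectral_theorem, ← map_mul, Unitary.conjStarAlgAut_apply, trace_mul_cycle,
    Unitary.coe_star_mul_self, one_mul, diagonal_mul_diagonal, trace_diagonal]
  simp [sq]

theorem IsHermitian.eigenvalues_sq_le {A : Matrix n n 𝕜} (hA : A.IsHermitian)
    (h0 : A.trace = 0) (h2 : (A * A).trace = Fintype.card n) (i : n) :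
    hA.eigenvalues i ^ 2 ≤ Fintype.card n - 1 := by
  have hsum : ∑ j, hA.eigenvalues j = 0 := by
    exact_mod_cast hA.trace_eq_sum_eigenvalues.symm.trans h0
  have hsum_sq : ∑ j, hA.eigenvalues j ^ 2 = Fintype.card n := by
    exact_mod_cast hA.trace_mul_self.symm.trans h2
  have hcard : (0 : ℝ) < Fintype.card n := by exact_mod_cast Fintype.card_pos_iff.2 ⟨i⟩
  have hbound := card_mul_sq_le_of_sum_eq_zero hsum i
  rw [hsum_sq, mul_comm _ (Fintype.card n : ℝ)] at hbound
  exact le_of_mul_le_mul_left hbound hcard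

theorem IsHermitian.posSemidef_smul_one_add {A : Matrix n n 𝕜} (hA : A.IsHermitian) {c : ℝ}
    (h : ∀ i, -c ≤ hA.eigenvalues i) : ((c : 𝕜) • 1 + A).PosSemidef := by
  open scoped MatrixOrder Matrix.Norms.L2Operator in
  have : algebraMap ℝ (Matrix n n 𝕜) (-c) ≤ A := by
    rw [algebraMap_le_iff_le_spectrum hA.isSelfAdjoint, hA.spectrum_real_eq_range_eigenvalues]
    rintro _ ⟨i, rfl⟩
    exact h i
  simpa [le_iff, Algebra.algebraMap_eq_smul_one, sub_eq_add_neg, add_comm,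
    ← RCLike.real_smul_eq_coe_smul (K := 𝕜)] using this

theorem IsHermitian.posSemidef_sqrt_smul_one_add {A : Matrix n n 𝕜} (hA : A.IsHermitian)
    (h0 : A.trace = 0) (h2 : (A * A).trace = Fintype.card n) :
    ((√(Fintype.card n - 1 : ℝ) : 𝕜) • 1 + A).PosSemidef :=
  hA.posSemidef_smul_one_add fun i ↦
    (abs_le.mp (Real.abs_le_sqrt (hA.eigenvalues_sq_le h0 h2 i))).1

theorem PosSemidef.re_trace_mul_smul_one_add_kronecker_nonneg
    {ρ : Matrix (n × m) (n × m) ℂ} (hρ : ρ.PosSemidef) (hρ1 : ρ.trace = 1) {a b : ℝ}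
    {X : Matrix n n ℂ} {Y : Matrix m m ℂ} (hX : ((a : ℂ) • 1 + X).PosSemidef)
    (hY : ((b : ℂ) • 1 + Y).PosSemidef) :
    0 ≤ a * b + a * (ρ * (1 ⊗ₖ Y)).trace.re + b * (ρ * (X ⊗ₖ 1)).trace.re +
      (ρ * (X ⊗ₖ Y)).trace.re := by
  have hexpand : ρ * (((a : ℂ) • 1 + X) ⊗ₖ ((b : ℂ) • 1 + Y)) =
      ((a * b : ℝ) : ℂ) • ρ + (a : ℂ) • (ρ * (1 ⊗ₖ Y)) + (b : ℂ) • (ρ * (X ⊗ₖ 1)) +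
        ρ * (X ⊗ₖ Y) := by
    simp only [add_kronecker, kronecker_add, smul_kronecker, kronecker_smul, one_kronecker_one,
      Matrix.mul_add, Matrix.mul_smul, Matrix.mul_one, Complex.ofReal_mul]
    module
  have hnonneg := (hρ.trace_mul_nonneg (hX.kronecker hY)).1
  rw [hexpand] at hnonneg
  simpa [hρ1] using hnonneg

end Matrix

theorem correlation_lower_bound_general (dA dB : ℕ)
    (ρ : Matrix (Fin dA × Fin dB) (Fin dA × Fin dB) ℂ)
    (hρ : ρ.PosSemidef) (hρtr : ρ.trace = 1)
    (X : Matrix (Fin dA) (Fin dA) ℂ) (Y : Matrix (Fin dB) (Fin dB) ℂ)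
    (hXh : X.IsHermitian) (hX0 : X.trace = 0) (hX2 : (X * X).trace = (dA : ℂ))
    (hYh : Y.IsHermitian) (hY0 : Y.trace = 0) (hY2 : (Y * Y).trace = (dB : ℂ)) :
    ‖(ρ * (X ⊗ₖ Y)).trace‖ ≥
      Real.sqrt ((dB : ℝ) - 1) * ‖(ρ * (X ⊗ₖ (1 : Matrix (Fin dB) (Fin dB) ℂ))).trace‖ +
      Real.sqrt ((dA : ℝ) - 1) * ‖(ρ * ((1 : Matrix (Fin dA) (Fin dA) ℂ) ⊗ₖ Y)).trace‖ -
      Real.sqrt ((dA : ℝ) - 1) * Real.sqrt ((dB : ℝ) - 1) := by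
  have hpsd (d : ℕ) (Z : Matrix (Fin d) (Fin d) ℂ) (hZ : Z.IsHermitian) (hZ0 : Z.trace = 0)
      (hZ2 : (Z * Z).trace = d) :
      ((√((d : ℝ) - 1) : ℂ) • 1 + Z).PosSemidef ∧ ((√((d : ℝ) - 1) : ℂ) • 1 + -Z).PosSemidef := by
    have h := hZ.posSemidef_sqrt_smul_one_add hZ0 (by simpa using hZ2)
    have h' := hZ.neg.posSemidef_sqrt_smul_one_add (by simp [hZ0]) (by simpa using hZ2)
    simp only [Fintype.card_fin] at h h'
    exact ⟨h, h'⟩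
  obtain ⟨hXp, hXm⟩ := hpsd dA X hXh hX0 hX2
  obtain ⟨hYp, hYm⟩ := hpsd dB Y hYh hY0 hY2
  have hpp := hρ.re_trace_mul_smul_one_add_kronecker_nonneg hρtr hXp hYp
  have hmp := hρ.re_trace_mul_smul_one_add_kronecker_nonneg hρtr hXm hYp
  have hpm := hρ.re_trace_mul_smul_one_add_kronecker_nonneg hρtr hXp hYm
  have hmm := hρ.re_trace_mul_smul_one_add_kronecker_nonneg hρtr hXm hYm
  simp only [neg_kronecker, kronecker_neg, Matrix.mul_neg, trace_neg, Complex.neg_re]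
    at hmp hpm hmm
  rw [hρ.1.norm_trace_mul_eq_abs_re (hXh.kronecker hYh),
    hρ.1.norm_trace_mul_eq_abs_re (hXh.kronecker isHermitian_one),
    hρ.1.norm_trace_mul_eq_abs_re (isHermitian_one.kronecker hYh)]
  exact mul_abs_add_mul_abs_sub_mul_le_abs hpp (by linarith) (by linarith) (by linarith)

/-- For a bipartite density operator `ρ` and traceless Hermitian operators
`X`, `Y` with `Tr X² = d_A`, `Tr Y² = d_B`:
`|⟨X⊗Y⟩| ≥ √(d_B-1)|⟨X⊗𝟙⟩| + √(d_A-1)|⟨𝟙⊗Y⟩| - √(d_A-1)√(d_B-1)`. -/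
theorem correlation_lower_bound (dA dB : ℕ) (hA : 2 ≤ dA) (hB : 2 ≤ dB)
    (ρ : Matrix (Fin dA × Fin dB) (Fin dA × Fin dB) ℂ)
    (hρ : ρ.PosSemidef) (hρtr : ρ.trace = 1)
    (X : Matrix (Fin dA) (Fin dA) ℂ) (Y : Matrix (Fin dB) (Fin dB) ℂ)
    (hXh : X.IsHermitian) (hX0 : X.trace = 0) (hX2 : (X * X).trace = (dA : ℂ))
    (hYh : Y.IsHermitian) (hY0 : Y.trace = 0) (hY2 : (Y * Y).trace = (dB : ℂ)) :
    ‖(ρ * (X ⊗ₖ Y)).trace‖ ≥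
      Real.sqrt ((dB : ℝ) - 1) * ‖(ρ * (X ⊗ₖ (1 : Matrix (Fin dB) (Fin dB) ℂ))).trace‖ +
      Real.sqrt ((dA : ℝ) - 1) * ‖(ρ * ((1 : Matrix (Fin dA) (Fin dA) ℂ) ⊗ₖ Y)).trace‖ -
      Real.sqrt ((dA : ℝ) - 1) * Real.sqrt ((dB : ℝ) - 1) :=
  correlation_lower_bound_general dA dB ρ hρ hρtr X Y hXh hX0 hX2 hYh hY0 hY2
end

section
/- Inhomogeneous subadditivity: for any bipartite density operator ρ_AB on ℂ^{d_A} ⊗ ℂ^{d_B} with marginals ρ_A = Tr_B(ρ_AB) and ρ_B = Tr_A(ρ_AB), S_L(ρ_AB) ≤ (1/d_B)·S_L(ρ_A) + (1/d_A)·S_L(ρ_B) + (d_A−1)(d_B−1)/(d_A d_B). -/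
/-!
Write `ρ = (ρ_A ⊗ 1)/d_B + (1 ⊗ ρ_B)/d_A - 1/(d_A d_B) + X`. The correlation part `X` is
Hermitian and trace-orthogonal to every local operator `M ⊗ 1` and `1 ⊗ N`, so
`Tr X² = Tr(ρ X) = Tr ρ² - Tr ρ_A²/d_B - Tr ρ_B²/d_A + 1/(d_A d_B)`. This is exactly the gap
between the two sides of the inequality, and it is nonnegative.
-/

open Matrix
open scoped ComplexOrder Kronecker

/-- The linear entropy `S_L(ρ) = 1 - Tr(ρ²)`. -/
noncomputable def linEntropy {n : Type*} [Fintype n] (ρ : Matrix n n ℂ) : ℝ :=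
  1 - ((ρ * ρ).trace).re

/-- Partial trace over the second factor. -/
noncomputable def ptraceB {dA dB : ℕ} (ρ : Matrix (Fin dA × Fin dB) (Fin dA × Fin dB) ℂ) :
    Matrix (Fin dA) (Fin dA) ℂ := fun i j => ∑ k, ρ (i, k) (j, k)

/-- Partial trace over the first factor. -/
noncomputable def ptraceA {dA dB : ℕ} (ρ : Matrix (Fin dA × Fin dB) (Fin dA × Fin dB) ℂ) :
    Matrix (Fin dB) (Fin dB) ℂ := fun i j => ∑ k, ρ (k, i) (k, j)

section PartialTrace

variable {dA dB : ℕ} (ρ : Matrix (Fin dA × Fin dB) (Fin dA × Fin dB) ℂ)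

lemma trace_ptraceB : (ptraceB ρ).trace = ρ.trace := by
  simp [Matrix.trace, ptraceB, Fintype.sum_prod_type]

lemma trace_ptraceA : (ptraceA ρ).trace = ρ.trace := by
  simp only [Matrix.trace, diag, ptraceA, Fintype.sum_prod_type]
  exact Finset.sum_comm

lemma trace_ptraceB_mul (M : Matrix (Fin dA) (Fin dA) ℂ) :
    (ptraceB ρ * M).trace = (ρ * (M ⊗ₖ 1)).trace := by
  simp only [Matrix.trace, diag, mul_apply, ptraceB, kroneckerMap_apply, one_apply,
    Fintype.sum_prod_type, Finset.sum_mul, mul_ite, mul_one, mul_zero, Finset.sum_ite_eq',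
    Finset.mem_univ, if_true]
  exact Finset.sum_congr rfl fun _ _ => Finset.sum_comm

lemma trace_ptraceA_mul (N : Matrix (Fin dB) (Fin dB) ℂ) :
    (ptraceA ρ * N).trace = (ρ * (1 ⊗ₖ N)).trace := by
  simp only [Matrix.trace, diag, mul_apply, ptraceA, kroneckerMap_apply, one_apply,
    Fintype.sum_prod_type, Finset.sum_mul, ite_mul, one_mul, zero_mul, mul_ite, mul_zero,
    Finset.sum_ite_irrel, Finset.sum_const_zero, Finset.sum_ite_eq', Finset.mem_univ, if_true]
  exact (Finset.sum_congr rfl fun _ _ => Finset.sum_comm).trans Finset.sum_comm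

lemma Matrix.IsHermitian.ptraceB {ρ : Matrix (Fin dA × Fin dB) (Fin dA × Fin dB) ℂ}
    (hρ : ρ.IsHermitian) : (ptraceB ρ).IsHermitian := by
  ext i j
  simp only [conjTranspose_apply, _root_.ptraceB, star_sum]
  exact Finset.sum_congr rfl fun k _ => hρ.apply (i, k) (j, k)

lemma Matrix.IsHermitian.ptraceA {ρ : Matrix (Fin dA × Fin dB) (Fin dA × Fin dB) ℂ}
    (hρ : ρ.IsHermitian) : (ptraceA ρ).IsHermitian := by
  ext i j
  simp only [conjTranspose_apply, _root_.ptraceA, star_sum]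
  exact Finset.sum_congr rfl fun k _ => hρ.apply (k, i) (k, j)

end PartialTrace

lemma Matrix.IsHermitian.trace_mul_self_nonneg {n R : Type*} [Fintype n] [Ring R]
    [PartialOrder R] [StarRing R] [StarOrderedRing R] {X : Matrix n n R} (hX : X.IsHermitian) :
    0 ≤ (X * X).trace := by
  simpa only [hX.eq] using (posSemidef_conjTranspose_mul_self X).trace_nonneg

section CorrelationPart

variable {dA dB : ℕ} (ρ : Matrix (Fin dA × Fin dB) (Fin dA × Fin dB) ℂ)

noncomputable def correlationPart : Matrix (Fin dA × Fin dB) (Fin dA × Fin dB) ℂ :=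
  ρ - (dB : ℂ)⁻¹ • (ptraceB ρ ⊗ₖ 1) - (dA : ℂ)⁻¹ • (1 ⊗ₖ ptraceA ρ) + ((dA : ℂ) * dB)⁻¹ • 1

variable {ρ}

lemma Matrix.IsHermitian.correlationPart (hρ : ρ.IsHermitian) :
    (correlationPart ρ).IsHermitian := by
  simp only [IsHermitian, _root_.correlationPart, conjTranspose_add, conjTranspose_sub,
    conjTranspose_smul, conjTranspose_kronecker, conjTranspose_one, hρ.eq, hρ.ptraceA.eq,
    hρ.ptraceB.eq, star_inv₀, star_mul', star_natCast]

lemma trace_correlationPart_mul_kronecker_one (hB : dB ≠ 0) (hρ : ρ.trace = 1)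
    (M : Matrix (Fin dA) (Fin dA) ℂ) : (correlationPart ρ * (M ⊗ₖ 1)).trace = 0 := by
  simp only [correlationPart, Matrix.sub_mul, Matrix.add_mul, smul_mul, ← mul_kronecker_mul,
    Matrix.one_mul, Matrix.mul_one, trace_sub, trace_add, trace_smul, trace_kronecker, trace_one,
    Fintype.card_fin, smul_eq_mul, ← trace_ptraceB_mul, trace_ptraceA, hρ]
  field_simp
  ring

lemma trace_correlationPart_mul_one_kronecker (hA : dA ≠ 0) (hρ : ρ.trace = 1)
    (N : Matrix (Fin dB) (Fin dB) ℂ) : (correlationPart ρ * (1 ⊗ₖ N)).trace = 0 := by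
  simp only [correlationPart, Matrix.sub_mul, Matrix.add_mul, smul_mul, ← mul_kronecker_mul,
    Matrix.one_mul, Matrix.mul_one, trace_sub, trace_add, trace_smul, trace_kronecker, trace_one,
    Fintype.card_fin, smul_eq_mul, ← trace_ptraceA_mul, trace_ptraceB, hρ]
  field_simp
  ring

lemma trace_correlationPart_mul_self (hA : dA ≠ 0) (hB : dB ≠ 0) (hρ : ρ.trace = 1) :
    (correlationPart ρ * correlationPart ρ).trace = (ρ * ρ).trace
      - (dB : ℂ)⁻¹ * (ptraceB ρ * ptraceB ρ).trace - (dA : ℂ)⁻¹ * (ptraceA ρ * ptraceA ρ).trace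
      + ((dA : ℂ) * dB)⁻¹ := by
  calc (correlationPart ρ * correlationPart ρ).trace = (correlationPart ρ * ρ).trace := by
        nth_rewrite 2 [correlationPart]
        rw [← one_kronecker_one (α := ℂ) (m := Fin dA) (n := Fin dB)]
        simp only [Matrix.mul_sub, Matrix.mul_add, Matrix.mul_smul, trace_sub, trace_add,
          trace_smul, trace_correlationPart_mul_kronecker_one hB hρ,
          trace_correlationPart_mul_one_kronecker hA hρ, smul_zero, sub_zero, add_zero]
    _ = (ρ * correlationPart ρ).trace := trace_mul_comm _ _
    _ = _ := by
        simp only [correlationPart, Matrix.mul_sub, Matrix.mul_add, Matrix.mul_smul, trace_sub,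
          trace_add, trace_smul, ← trace_ptraceB_mul, ← trace_ptraceA_mul, hρ,
          smul_eq_mul, mul_one]

end CorrelationPart

theorem inhomogeneous_subadditivity_general (dA dB : ℕ)
    (ρ : Matrix (Fin dA × Fin dB) (Fin dA × Fin dB) ℂ)
    (hρ : ρ.PosSemidef) (hρtr : ρ.trace = 1) :
    linEntropy ρ ≤ (1 / dB) * linEntropy (ptraceB ρ) + (1 / dA) * linEntropy (ptraceA ρ) +
      ((dA : ℝ) - 1) * ((dB : ℝ) - 1) / (dA * dB) := by
  obtain ⟨i, j⟩ : Nonempty (Fin dA × Fin dB) := by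
    by_contra h
    simp [trace, not_nonempty_iff.1 h] at hρtr
  have hdA : (dA : ℝ) ≠ 0 := Nat.cast_ne_zero.2 i.pos.ne'
  have hdB : (dB : ℝ) ≠ 0 := Nat.cast_ne_zero.2 j.pos.ne'
  have hgap : (1 / dB) * linEntropy (ptraceB ρ) + (1 / dA) * linEntropy (ptraceA ρ) +
      ((dA : ℝ) - 1) * ((dB : ℝ) - 1) / (dA * dB) - linEntropy ρ =
      (correlationPart ρ * correlationPart ρ).trace.re := by
    rw [trace_correlationPart_mul_self i.pos.ne' j.pos.ne' hρtr]
    simp only [one_div, linEntropy, _root_.mul_inv_rev, Complex.add_re, Complex.sub_re,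
      Complex.mul_re, Complex.inv_re, Complex.natCast_re, Complex.normSq_natCast,
      div_self_mul_self', Complex.inv_im, Complex.natCast_im, neg_zero, zero_div, zero_mul,
      sub_zero, mul_zero]
    field_simp
    ring
  have := (Complex.nonneg_iff.1 hρ.1.correlationPart.trace_mul_self_nonneg).1
  linarith

/-- **Inhomogeneous subadditivity.** For any bipartite density operator `ρ_AB`
with marginals `ρ_A`, `ρ_B`:
`S_L(ρ_AB) ≤ S_L(ρ_A)/d_B + S_L(ρ_B)/d_A + (d_A-1)(d_B-1)/(d_A d_B)`. -/
theorem inhomogeneous_subadditivity (dA dB : ℕ) (hA : 2 ≤ dA) (hB : 2 ≤ dB)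
    (ρ : Matrix (Fin dA × Fin dB) (Fin dA × Fin dB) ℂ)
    (hρ : ρ.PosSemidef) (hρtr : ρ.trace = 1) :
    linEntropy ρ ≤ (1 / dB) * linEntropy (ptraceB ρ) + (1 / dA) * linEntropy (ptraceA ρ) +
      ((dA : ℝ) - 1) * ((dB : ℝ) - 1) / (dA * dB) :=
  inhomogeneous_subadditivity_general dA dB ρ hρ hρtr
end

section
/- The inequality of Lemma ISA is always at least as sharp as the quadratic inequality of Appel et al.: for all real x, y with 0 ≤ x ≤ (d_A−1)/d_A, 0 ≤ y ≤ (d_B−1)/d_B, one has (1/d_B)·x + (1/d_A)·y + (d_A−1)(d_B−1)/(d_A d_B) ≤ 1 + 1/(d_A d_B) − 2·√((1/(d_A d_B))·(1−x)·(1−y)). -/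
/-- The ISA bound is always at least as sharp as the quadratic bound of
Appel et al.: for `0 ≤ x ≤ (d_A-1)/d_A` and `0 ≤ y ≤ (d_B-1)/d_B`,
`x/d_B + y/d_A + (d_A-1)(d_B-1)/(d_A d_B) ≤ 1 + 1/(d_A d_B) - 2√((1-x)(1-y)/(d_A d_B))`. -/
theorem isa_sharper_than_appel (dA dB : ℕ) (hA : 2 ≤ dA) (hB : 2 ≤ dB)
    (x y : ℝ) (hx0 : 0 ≤ x) (hx1 : x ≤ ((dA : ℝ) - 1) / dA)
    (hy0 : 0 ≤ y) (hy1 : y ≤ ((dB : ℝ) - 1) / dB) :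
    (1 / dB) * x + (1 / dA) * y + ((dA : ℝ) - 1) * ((dB : ℝ) - 1) / (dA * dB) ≤
      1 + 1 / ((dA : ℝ) * dB) - 2 * Real.sqrt ((1 / ((dA : ℝ) * dB)) * (1 - x) * (1 - y)) := by
  have hdA : (2:ℝ) ≤ dA := by exact_mod_cast hA
  have hdB : (2:ℝ) ≤ dB := by exact_mod_cast hB
  have hA0 : (0:ℝ) < dA := by linarith
  have hB0 : (0:ℝ) < dB := by linarith
  have hx : x ≤ 1 := le_trans hx1 (by rw [div_le_one hA0]; linarith)
  have hy : y ≤ 1 := le_trans hy1 (by rw [div_le_one hB0]; linarith)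
  set a := Real.sqrt ((1 - x) / dB) with ha
  set b := Real.sqrt ((1 - y) / dA) with hb
  have hx' : (0:ℝ) ≤ 1 - x := by linarith
  have hy' : (0:ℝ) ≤ 1 - y := by linarith
  have ha2 : a ^ 2 = (1 - x) / dB := Real.sq_sqrt (by positivity)
  have hb2 : b ^ 2 = (1 - y) / dA := Real.sq_sqrt (by positivity)
  have key : Real.sqrt ((1 / ((dA : ℝ) * dB)) * (1 - x) * (1 - y)) = a * b := by
    rw [ha, hb, ← Real.sqrt_mul (by positivity), show (1 / ((dA : ℝ) * dB)) * (1 - x) * (1 - y)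
      = ((1 - x) / dB) * ((1 - y) / dA) from by ring]
  rw [key]
  have h2ab : 2 * (a * b) ≤ (1 - x) / dB + (1 - y) / dA := by
    nlinarith [sq_nonneg (a - b), ha2, hb2]
  have hid : 1 / (dB:ℝ) + 1 / dA + ((dA:ℝ) - 1) * ((dB:ℝ) - 1) / (dA * dB)
      = 1 + 1 / ((dA:ℝ) * dB) := by
    field_simp
    ring
  have e1 : (1 - x) / (dB:ℝ) = 1 / dB - 1 / dB * x := by ring
  have e2 : (1 - y) / (dA:ℝ) = 1 / dA - 1 / dA * y := by ring
  linarith [h2ab, hid, e1, e2]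
end

section
/- For the family ρ(α) = α·(|0⟩⟨0| ⊗ 𝟙/d_B) + (1−α)·(𝟙/d_A ⊗ |0⟩⟨0|), α ∈ [0,1], the linear entropies are S_L(ρ_A(α)) = (d_A−1)/d_A·(1−α²), S_L(ρ_B(α)) = (d_B−1)/d_B·(2α−α²), and S_L(ρ(α)) = (d_A−1)/d_A + 2(d_B−1)/(d_A d_B)·α − (d_A+d_B−2)/(d_A d_B)·α², and these values satisfy inhomogeneous subadditivity with equality: S_L(ρ(α)) = (1/d_B)S_L(ρ_A(α)) + (1/d_A)S_L(ρ_B(α)) + (d_A−1)(d_B−1)/(d_A d_B). -/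
open Matrix
open scoped ComplexOrder Kronecker

/-!
The marginals are `α·|0⟩⟨0| + ((1-α)/d_A)·𝟙` and `(1-α)·|0⟩⟨0| + (α/d_B)·𝟙`, and `ρ` itself is
`(α/d_B)·(|0⟩⟨0| ⊗ 𝟙) + ((1-α)/d_A)·(𝟙 ⊗ |0⟩⟨0|)`. Expanding `Tr((aX + bY)²)` with
`Tr(XY) = Tr(YX)`, every trace that appears is `1` or a dimension, so all three linear entropies
are explicit quadratics in `α`, and the saturation of inhomogeneous subadditivity is an identity
between them.
-/

theorem Matrix.trace_smul_add_smul_mul_self {n R : Type*} [Fintype n] [CommRing R] (a b : R)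
    (X Y : Matrix n n R) :
    ((a • X + b • Y) * (a • X + b • Y)).trace =
      a ^ 2 * (X * X).trace + 2 * a * b * (X * Y).trace + b ^ 2 * (Y * Y).trace := by
  simp only [add_mul, mul_add, smul_mul, Matrix.mul_smul, trace_add, trace_smul, smul_eq_mul,
    trace_mul_comm Y X]
  ring

theorem linEntropy_eq_of_trace_mul_self {n : Type*} [Fintype n] {ρ : Matrix n n ℂ} {r : ℝ}
    (h : (ρ * ρ).trace = r) : linEntropy ρ = 1 - r := by
  rw [linEntropy, h, Complex.ofReal_re]

theorem linEntropy_smul_single_add_smul_one {n : Type*} [Fintype n] [DecidableEq n] (i : n)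
    (a b : ℝ) :
    linEntropy ((a : ℂ) • single i i (1 : ℂ) + (b : ℂ) • (1 : Matrix n n ℂ)) =
      1 - (a ^ 2 + 2 * a * b + Fintype.card n * b ^ 2) := by
  apply linEntropy_eq_of_trace_mul_self
  rw [trace_smul_add_smul_mul_self]
  simp only [single_mul_single_same, mul_one, trace_single_eq_same, trace_one]
  push_cast
  ring

theorem linEntropy_smul_single_kronecker_one_add {m n : Type*} [Fintype m] [DecidableEq m]
    [Fintype n] [DecidableEq n] (i : m) (j : n) (a b : ℝ) :
    linEntropy ((a : ℂ) • (single i i (1 : ℂ) ⊗ₖ (1 : Matrix n n ℂ)) +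
        (b : ℂ) • ((1 : Matrix m m ℂ) ⊗ₖ single j j (1 : ℂ))) =
      1 - (a ^ 2 * Fintype.card n + 2 * a * b + b ^ 2 * Fintype.card m) := by
  apply linEntropy_eq_of_trace_mul_self
  rw [trace_smul_add_smul_mul_self]
  simp only [← mul_kronecker_mul, single_mul_single_same, mul_one, one_mul, trace_kronecker,
    trace_single_eq_same, trace_one]
  push_cast
  ring

section PartialTrace

variable {dA dB : ℕ}

theorem ptraceB_add (ρ σ : Matrix (Fin dA × Fin dB) (Fin dA × Fin dB) ℂ) :
    ptraceB (ρ + σ) = ptraceB ρ + ptraceB σ := by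
  ext i j
  simp [ptraceB, Finset.sum_add_distrib]

theorem ptraceA_add (ρ σ : Matrix (Fin dA × Fin dB) (Fin dA × Fin dB) ℂ) :
    ptraceA (ρ + σ) = ptraceA ρ + ptraceA σ := by
  ext i j
  simp [ptraceA, Finset.sum_add_distrib]

theorem ptraceB_smul (c : ℂ) (ρ : Matrix (Fin dA × Fin dB) (Fin dA × Fin dB) ℂ) :
    ptraceB (c • ρ) = c • ptraceB ρ := by
  ext i j
  simp [ptraceB, Finset.mul_sum]

theorem ptraceA_smul (c : ℂ) (ρ : Matrix (Fin dA × Fin dB) (Fin dA × Fin dB) ℂ) :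
    ptraceA (c • ρ) = c • ptraceA ρ := by
  ext i j
  simp [ptraceA, Finset.mul_sum]

theorem ptraceB_kronecker (M : Matrix (Fin dA) (Fin dA) ℂ) (N : Matrix (Fin dB) (Fin dB) ℂ) :
    ptraceB (M ⊗ₖ N) = N.trace • M := by
  ext i j
  simp [ptraceB, trace, Finset.mul_sum, mul_comm]

theorem ptraceA_kronecker (M : Matrix (Fin dA) (Fin dA) ℂ) (N : Matrix (Fin dB) (Fin dB) ℂ) :
    ptraceA (M ⊗ₖ N) = M.trace • N := by
  ext i j
  simp [ptraceA, trace, Finset.sum_mul]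

end PartialTrace

/-- For the family
`ρ(α) = α (|0⟩⟨0| ⊗ 𝟙/d_B) + (1-α)(𝟙/d_A ⊗ |0⟩⟨0|)`, the linear entropies are as stated and
they saturate inhomogeneous subadditivity. -/
theorem family_saturates_ISA (dA dB : ℕ) (hA : 2 ≤ dA) (hB : 2 ≤ dB)
    (α : ℝ)
    (ρ : Matrix (Fin dA × Fin dB) (Fin dA × Fin dB) ℂ)
    (hρdef : ρ = (α : ℂ) •
        ((Matrix.single (⟨0, by omega⟩ : Fin dA) (⟨0, by omega⟩ : Fin dA) (1 : ℂ)) ⊗ₖ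
          ((dB : ℂ)⁻¹ • (1 : Matrix (Fin dB) (Fin dB) ℂ)))
      + ((1 - α : ℝ) : ℂ) •
        (((dA : ℂ)⁻¹ • (1 : Matrix (Fin dA) (Fin dA) ℂ)) ⊗ₖ
          (Matrix.single (⟨0, by omega⟩ : Fin dB) (⟨0, by omega⟩ : Fin dB) (1 : ℂ)))) :
    linEntropy (ptraceB ρ) = ((dA : ℝ) - 1) / dA * (1 - α ^ 2) ∧
    linEntropy (ptraceA ρ) = ((dB : ℝ) - 1) / dB * (2 * α - α ^ 2) ∧
    linEntropy ρ = ((dA : ℝ) - 1) / dA + 2 * ((dB : ℝ) - 1) / ((dA : ℝ) * dB) * α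
      - ((dA : ℝ) + dB - 2) / ((dA : ℝ) * dB) * α ^ 2 ∧
    linEntropy ρ = (1 / dB) * linEntropy (ptraceB ρ) + (1 / dA) * linEntropy (ptraceA ρ)
      + ((dA : ℝ) - 1) * ((dB : ℝ) - 1) / ((dA : ℝ) * dB) := by
  set EA := single (⟨0, by omega⟩ : Fin dA) (⟨0, by omega⟩ : Fin dA) (1 : ℂ)
  set EB := single (⟨0, by omega⟩ : Fin dB) (⟨0, by omega⟩ : Fin dB) (1 : ℂ)
  have hρ : ρ = ((α / dB : ℝ) : ℂ) • (EA ⊗ₖ (1 : Matrix (Fin dB) (Fin dB) ℂ)) +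
      (((1 - α) / dA : ℝ) : ℂ) • ((1 : Matrix (Fin dA) (Fin dA) ℂ) ⊗ₖ EB) := by
    rw [hρdef, kronecker_smul, smul_kronecker, smul_smul, smul_smul]
    push_cast
    ring_nf
  have hρB : ptraceB ρ = (α : ℂ) • EA + (((1 - α) / dA : ℝ) : ℂ) • 1 := by
    simp only [hρ, ptraceB_add, ptraceB_smul, ptraceB_kronecker, EB, trace_single_eq_same,
      trace_one, Fintype.card_fin, smul_smul, one_smul]
    push_cast
    field_simp
  have hρA : ptraceA ρ = ((1 - α : ℝ) : ℂ) • EB + ((α / dB : ℝ) : ℂ) • 1 := by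
    simp only [hρ, ptraceA_add, ptraceA_smul, ptraceA_kronecker, EA, trace_single_eq_same,
      trace_one, Fintype.card_fin, smul_smul, one_smul]
    push_cast
    field_simp
    rw [add_comm]
  have hSB : linEntropy (ptraceB ρ) = ((dA : ℝ) - 1) / dA * (1 - α ^ 2) := by
    rw [hρB, linEntropy_smul_single_add_smul_one, Fintype.card_fin]
    field_simp
    ring
  have hSA : linEntropy (ptraceA ρ) = ((dB : ℝ) - 1) / dB * (2 * α - α ^ 2) := by
    rw [hρA, linEntropy_smul_single_add_smul_one, Fintype.card_fin]
    field_simp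
    ring
  have hS : linEntropy ρ = ((dA : ℝ) - 1) / dA + 2 * ((dB : ℝ) - 1) / ((dA : ℝ) * dB) * α
      - ((dA : ℝ) + dB - 2) / ((dA : ℝ) * dB) * α ^ 2 := by
    rw [hρ, linEntropy_smul_single_kronecker_one_add, Fintype.card_fin, Fintype.card_fin]
    field_simp
    ring
  refine ⟨hSB, hSA, hS, ?_⟩
  rw [hSB, hSA, hS]
  field_simp
  ring
end

section
/- The combined bound function f(x,y) (equal to g(x,y) = x+y−2D_A D_B(1−√(1−x/D_A))(1−√(1−y/D_B)) when x ≤ r(y) and to h(x,y) = x/d_B + y/d_A + D_A D_B otherwise) is strictly monotonically increasing in both variables on [0,D_A]×[0,D_B], with partial derivatives bounded below by 1/d_B in x and 1/d_A in y. -/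
noncomputable section

def Dfrac (d : ℕ) : ℝ := ((d : ℝ) - 1) / d

def gDSSA (dA dB : ℕ) (x y : ℝ) : ℝ :=
  x + y - 2 * Dfrac dA * Dfrac dB *
    (1 - Real.sqrt (1 - x / Dfrac dA)) * (1 - Real.sqrt (1 - y / Dfrac dB))

def hISA (dA dB : ℕ) (x y : ℝ) : ℝ :=
  x / dB + y / dA + Dfrac dA * Dfrac dB

def rBd (dA dB : ℕ) (y : ℝ) : ℝ :=
  Dfrac dA * (y / Dfrac dB - 1 + 2 * Real.sqrt (1 - y / Dfrac dB))

def fBound (dA dB : ℕ) (x y : ℝ) : ℝ :=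
  if x ≤ rBd dA dB y then gDSSA dA dB x y else hISA dA dB x y

/-!
With `u = √(1 - x/D_A)` and `s = √(1 - y/D_B)` one has `x = D_A (1 - u²)`,
`y = D_B (1 - s²)`, `g = x + y - 2 D_A D_B (1 - u)(1 - s)` and `r(y) = D_A (1 - (1 - s)²)`, so the
cut `x ≤ r(y)` is the symmetric condition `1 ≤ u + s`, and `f` is symmetric under swapping
`(d_A, x)` with `(d_B, y)`. It therefore suffices to treat `x`. On the region `x ≤ r(y)` an
increment of `g` in `x` exceeds `(x' - x)/d_B` by `D_A D_B (u - u')(u + u' - 2(1 - s)) ≥ 0`;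
beyond the cut `h` has slope exactly `1/d_B`, and `g = h` on the cut itself.
-/

open Set

lemma Dfrac_pos {d : ℕ} (hd : 1 < d) : 0 < Dfrac d := by
  have : (1 : ℝ) < d := by exact_mod_cast hd
  exact div_pos (by linarith) (by linarith)

lemma div_natCast_eq_mul_one_sub_Dfrac {d : ℕ} (hd : d ≠ 0) (t : ℝ) :
    t / d = t * (1 - Dfrac d) := by
  have : (d : ℝ) ≠ 0 := by exact_mod_cast hd
  rw [Dfrac]
  field_simp
  ring

lemma one_sub_div_nonneg {a x : ℝ} (ha : 0 < a) (hx : x ≤ a) : 0 ≤ 1 - x / a :=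
  sub_nonneg.2 ((div_le_one ha).2 hx)

lemma eq_mul_one_sub_sq_sqrt {a x : ℝ} (ha : 0 < a) (hx : x ≤ a) :
    x = a * (1 - √(1 - x / a) ^ 2) := by
  rw [Real.sq_sqrt (one_sub_div_nonneg ha hx)]
  field_simp
  ring

lemma sqrt_one_sub_div_le_one {a x : ℝ} (ha : 0 < a) (hx : 0 ≤ x) : √(1 - x / a) ≤ 1 :=
  Real.sqrt_le_one.2 (sub_le_self _ (div_nonneg hx ha.le))

lemma gDSSA_swap (dA dB : ℕ) (x y : ℝ) : gDSSA dA dB x y = gDSSA dB dA y x := by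
  unfold gDSSA
  ring

lemma hISA_swap (dA dB : ℕ) (x y : ℝ) : hISA dA dB x y = hISA dB dA y x := by
  unfold hISA
  ring

section

variable {dA dB : ℕ} {x x' y : ℝ}

lemma rBd_eq (hB : 1 < dB) (hy : y ≤ Dfrac dB) :
    rBd dA dB y = Dfrac dA * (1 - (1 - √(1 - y / Dfrac dB)) ^ 2) := by
  have hs := Real.sq_sqrt (one_sub_div_nonneg (Dfrac_pos hB) hy)
  unfold rBd
  linear_combination Dfrac dA * hs

lemma rBd_nonneg (hA : 1 < dA) (hB : 1 < dB) (hy0 : 0 ≤ y) (hy : y ≤ Dfrac dB) :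
    0 ≤ rBd dA dB y := by
  have hs0 : 0 ≤ √(1 - y / Dfrac dB) := Real.sqrt_nonneg _
  have hs1 := sqrt_one_sub_div_le_one (Dfrac_pos hB) hy0
  rw [rBd_eq hB hy]
  exact mul_nonneg (Dfrac_pos hA).le (by nlinarith)

lemma rBd_le_Dfrac (hA : 1 < dA) (hB : 1 < dB) (hy : y ≤ Dfrac dB) :
    rBd dA dB y ≤ Dfrac dA := by
  rw [rBd_eq hB hy]
  exact mul_le_of_le_one_right (Dfrac_pos hA).le (sub_le_self _ (sq_nonneg _))

lemma le_rBd_iff (hA : 1 < dA) (hB : 1 < dB) (hx : x ≤ Dfrac dA) (hy0 : 0 ≤ y)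
    (hy : y ≤ Dfrac dB) :
    x ≤ rBd dA dB y ↔ 1 ≤ √(1 - x / Dfrac dA) + √(1 - y / Dfrac dB) := by
  have ha := Dfrac_pos hA
  have hs1 := sqrt_one_sub_div_le_one (Dfrac_pos hB) hy0
  rw [rBd_eq hB hy, ← div_le_iff₀' ha, ← sub_le_iff_le_add,
    Real.le_sqrt (by linarith) (one_sub_div_nonneg ha hx)]
  constructor <;> intro h <;> linarith

lemma gDSSA_rBd (hA : 1 < dA) (hB : 1 < dB) (hy0 : 0 ≤ y) (hy : y ≤ Dfrac dB) :
    gDSSA dA dB (rBd dA dB y) y = hISA dA dB (rBd dA dB y) y := by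
  have ha := Dfrac_pos hA
  have hb := Dfrac_pos hB
  have hy_eq := eq_mul_one_sub_sq_sqrt hb hy
  have hs1 := sqrt_one_sub_div_le_one hb hy0
  set s := √(1 - y / Dfrac dB)
  have hu : √(1 - Dfrac dA * (1 - (1 - s) ^ 2) / Dfrac dA) = 1 - s := by
    rw [mul_div_cancel_left₀ _ ha.ne', sub_sub_cancel, Real.sqrt_sq (by linarith)]
  rw [rBd_eq hB hy]
  unfold gDSSA hISA
  rw [hu, div_natCast_eq_mul_one_sub_Dfrac (by omega), div_natCast_eq_mul_one_sub_Dfrac (by omega)]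
  linear_combination Dfrac dA * hy_eq

lemma fBound_swap (hA : 1 < dA) (hB : 1 < dB) (hx0 : 0 ≤ x) (hx : x ≤ Dfrac dA) (hy0 : 0 ≤ y)
    (hy : y ≤ Dfrac dB) : fBound dA dB x y = fBound dB dA y x := by
  unfold fBound
  rw [gDSSA_swap, hISA_swap]
  exact if_congr (by rw [le_rBd_iff hA hB hx hy0 hy, le_rBd_iff hB hA hy hx0 hx, add_comm]) rfl rfl

lemma fBound_of_rBd_le (hA : 1 < dA) (hB : 1 < dB) (hy0 : 0 ≤ y) (hy : y ≤ Dfrac dB)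
    (hx : rBd dA dB y ≤ x) : fBound dA dB x y = hISA dA dB x y := by
  unfold fBound
  split_ifs with h
  · rw [le_antisymm h hx, gDSSA_rBd hA hB hy0 hy]
  · rfl

lemma div_le_gDSSA_sub_gDSSA (hA : 1 < dA) (hB : 1 < dB) (hxx' : x ≤ x') (hx' : x' ≤ Dfrac dA)
    (hcut : 1 ≤ √(1 - x' / Dfrac dA) + √(1 - y / Dfrac dB)) :
    (x' - x) / dB ≤ gDSSA dA dB x' y - gDSSA dA dB x y := by
  have ha := Dfrac_pos hA
  have hb := Dfrac_pos hB
  have hx_eq := eq_mul_one_sub_sq_sqrt ha (hxx'.trans hx')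
  have hx'_eq := eq_mul_one_sub_sq_sqrt ha hx'
  have hu'u : √(1 - x' / Dfrac dA) ≤ √(1 - x / Dfrac dA) := Real.sqrt_le_sqrt (by gcongr)
  have hu' : 0 ≤ √(1 - x' / Dfrac dA) := Real.sqrt_nonneg _
  unfold gDSSA
  set u := √(1 - x / Dfrac dA)
  set u' := √(1 - x' / Dfrac dA)
  set s := √(1 - y / Dfrac dB)
  have key : 0 ≤ Dfrac dA * Dfrac dB * (u - u') * (u + u' - 2 * (1 - s)) :=
    mul_nonneg (by positivity [sub_nonneg.2 hu'u]) (by linarith)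
  rw [div_natCast_eq_mul_one_sub_Dfrac (by omega)]
  linear_combination key + Dfrac dB * (hx_eq - hx'_eq)

lemma monotoneOn_fBound_sub_div (hA : 1 < dA) (hB : 1 < dB) (hy0 : 0 ≤ y) (hy : y ≤ Dfrac dB) :
    MonotoneOn (fun x ↦ fBound dA dB x y - x / dB) (Icc 0 (Dfrac dA)) := by
  have hc0 := rBd_nonneg hA hB hy0 hy
  have hca := rBd_le_Dfrac hA hB hy
  rw [← Icc_union_Icc_eq_Icc hc0 hca]
  refine MonotoneOn.union_right ?_ ?_ (isGreatest_Icc hc0) (isLeast_Icc hca)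
  · refine MonotoneOn.congr (f₁ := fun x ↦ gDSSA dA dB x y - x / dB) ?_
      fun x hx ↦ by simp only [fBound, if_pos hx.2]
    intro x _ x' hx' hxx'
    have hcut := (le_rBd_iff hA hB (hx'.2.trans hca) hy0 hy).1 hx'.2
    have := div_le_gDSSA_sub_gDSSA hA hB hxx' (hx'.2.trans hca) hcut
    rw [sub_div] at this
    linarith
  · refine MonotoneOn.congr (f₁ := fun _ ↦ y / dA + Dfrac dA * Dfrac dB) monotoneOn_const
      fun x hx ↦ ?_
    rw [fBound_of_rBd_le hA hB hy0 hy hx.1, hISA]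
    ring

lemma fBound_lt_fBound_and_div_le_sub (hA : 1 < dA) (hB : 1 < dB) (hx : 0 ≤ x) (hxx' : x < x')
    (hx' : x' ≤ Dfrac dA) (hy0 : 0 ≤ y) (hy : y ≤ Dfrac dB) :
    fBound dA dB x y < fBound dA dB x' y ∧
      (x' - x) / dB ≤ fBound dA dB x' y - fBound dA dB x y := by
  have hmono := monotoneOn_fBound_sub_div hA hB hy0 hy ⟨hx, hxx'.le.trans hx'⟩
    ⟨hx.trans hxx'.le, hx'⟩ hxx'.le
  have hpos : 0 < (x' - x) / dB := div_pos (sub_pos.2 hxx') (by positivity)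
  simp only at hmono
  rw [sub_div] at hpos ⊢
  constructor <;> linarith

end

/-- The combined bound `f` is strictly increasing in both variables on
`[0,D_A] × [0,D_B]`, and the increments are bounded below by the slopes `1/d_B` (in `x`)
and `1/d_A` (in `y`), expressing that the partial derivatives are bounded below by these. -/
theorem fBound_strict_mono (dA dB : ℕ) (hA : 2 ≤ dA) (hB : 2 ≤ dB) :
    (∀ x x' y : ℝ, 0 ≤ x → x < x' → x' ≤ Dfrac dA → 0 ≤ y → y ≤ Dfrac dB →
      fBound dA dB x y < fBound dA dB x' y ∧
      (x' - x) / dB ≤ fBound dA dB x' y - fBound dA dB x y) ∧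
    (∀ x y y' : ℝ, 0 ≤ x → x ≤ Dfrac dA → 0 ≤ y → y < y' → y' ≤ Dfrac dB →
      fBound dA dB x y < fBound dA dB x y' ∧
      (y' - y) / dA ≤ fBound dA dB x y' - fBound dA dB x y) := by
  refine ⟨fun x x' y hx hxx' hx' hy0 hy ↦
    fBound_lt_fBound_and_div_le_sub hA hB hx hxx' hx' hy0 hy,
    fun x y y' hx0 hx hy hyy' hy' ↦ ?_⟩
  rw [fBound_swap hA hB hx0 hx hy (hyy'.le.trans hy'),
    fBound_swap hA hB hx0 hx (hy.trans hyy'.le) hy']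
  exact fBound_lt_fBound_and_div_le_sub hB hA hy hyy' hy' hx0 hx

end
end
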